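/- Let p ∈ (1,∞) and p' = p/(p−1). Let (Ω, 𝔉, P) be a complete probability space with a right-continuous filtration (𝔉_t)_{t∈[0,1]}. Let f : [0,1]×Ω → ℝ be progressively measurable with E ∫_0^1 |f(t)|^{p'} dt < ∞, and let φ : [0,1]×Ω → ℝ be progressively measurable with E ∫_0^1 |φ(t)|^p dt < ∞. Then ∫_0^1 E[ φ(s,·) · E[ ∫_s^1 f(t,·) dt | 𝔉_s ] ] ds = E[ ∫_0^1 f(t,·) (∫_0^t φ(s,·) ds) dt ]. In other words, the adjoint of the integration operator 𝓛(φ)(t) = ∫_0^t φ(s) ds, restricted to L_{p'}, is represented by 𝓛*(f)(t,ω) = E[ ∫_t^1 f(s,·) ds | 𝔉_t ](ω). -/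

import Mathlib

open MeasureTheory Set ENNReal

/-!
Write `X_s = ∫_s^1 f`. Since `φ(s)` is `𝔉_s`-measurable, the pull-out property gives
`E[φ(s) E[X_s | 𝔉_s]] = E[φ(s) X_s]` for a.e. `s`. Exchanging the `s`- and `ω`-integrals, and then,
for a.e. `ω`, the order of integration over the triangle `{s < t}`, turns `∫_0^1 φ(s) X_s ds`
into `∫_0^1 f(t) ∫_0^t φ`. Every exchange is justified by Hölder's inequality: by Jensen,
`g_f(ω) = ∫_0^1 |f(t,ω)| dt` lies in `L^{p'}(P)`, and `|φ(s) X_s| ≤ |φ(s)| g_f`, whose integral is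
at most `‖g_φ‖_p ‖g_f‖_{p'}`. Progressive measurability supplies jointly measurable versions of
`f` and `φ` on `(-∞, 1] × Ω`.
-/

theorem MeasureTheory.IsStronglyProgressive.exists_stronglyMeasurable_uncurry_eq_of_le
    {ι Ω β : Type*} [LinearOrder ι] [TopologicalSpace ι] [OrderClosedTopology ι]
    [MeasurableSpace ι] [OpensMeasurableSpace ι] [TopologicalSpace β] [Zero β]
    {m : MeasurableSpace Ω} {ℱ : Filtration ι m} {u : ι → Ω → β}
    (hu : IsStronglyProgressive ℱ u) (i : ι) :
    ∃ v : ι → Ω → β, StronglyMeasurable (Function.uncurry v) ∧ ∀ t ≤ i, v t = u t := by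
  have he : MeasurableEmbedding (Prod.map (↑) id : Iic i × Ω → ι × Ω) :=
    (MeasurableEmbedding.subtype_coe measurableSet_Iic).prodMap MeasurableEmbedding.id
  have hui : StronglyMeasurable fun q : Iic i × Ω => u q.1 q.2 :=
    (hu i).mono <| sup_le_sup le_rfl (MeasurableSpace.comap_mono (ℱ.le i))
  refine ⟨Function.curry (Function.extend _ (fun q : Iic i × Ω => u q.1 q.2) 0),
    he.stronglyMeasurable_extend hui stronglyMeasurable_const, fun t ht => funext fun ω => ?_⟩
  exact he.injective.extend_apply _ _ (⟨t, ht⟩, ω)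

theorem rpow_lintegral_le_lintegral_rpow {α : Type*} [MeasurableSpace α] {μ : Measure α}
    [IsProbabilityMeasure μ] {a : ℝ} (ha : 1 ≤ a) {h : α → ℝ≥0∞} (hh : AEMeasurable h μ) :
    (∫⁻ x, h x ∂μ) ^ a ≤ ∫⁻ x, h x ^ a ∂μ := by
  have hLp := eLpNorm'_le_eLpNorm'_mul_rpow_measure_univ one_pos ha hh.aestronglyMeasurable
  simp only [eLpNorm', enorm_eq_self, rpow_one, div_one, measure_univ, one_rpow, mul_one] at hLp
  calc (∫⁻ x, h x ∂μ) ^ a ≤ ((∫⁻ x, h x ^ a ∂μ) ^ (1 / a)) ^ a := by gcongr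
    _ = ∫⁻ x, h x ^ a ∂μ := by rw [← rpow_mul, one_div_mul_cancel (by positivity), rpow_one]

theorem lintegral_lt_top_of_lintegral_rpow_lt_top {α : Type*} [MeasurableSpace α]
    {μ : Measure α} [IsFiniteMeasure μ] {a : ℝ} (ha : 1 ≤ a) {h : α → ℝ≥0∞}
    (hh : AEMeasurable h μ) (hfin : ∫⁻ x, h x ^ a ∂μ < ∞) : ∫⁻ x, h x ∂μ < ∞ := by
  have hLp := eLpNorm'_lt_top_of_eLpNorm'_lt_top_of_exponent_le (p := 1) hh.aestronglyMeasurable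
    ?_ zero_le_one ha
  · simpa [eLpNorm'] using hLp
  · simp only [eLpNorm', enorm_eq_self]
    exact rpow_lt_top_of_nonneg (by positivity) hfin.ne

theorem lintegral_mul_lt_top_of_holderConjugate {α : Type*} [MeasurableSpace α] {μ : Measure α}
    {a b : ℝ} (hab : a.HolderConjugate b) {u v : α → ℝ≥0∞} (hu : AEMeasurable u μ)
    (hv : AEMeasurable v μ) (hua : ∫⁻ x, u x ^ a ∂μ < ∞) (hvb : ∫⁻ x, v x ^ b ∂μ < ∞) :
    ∫⁻ x, u x * v x ∂μ < ∞ :=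
  (ENNReal.lintegral_mul_le_Lp_mul_Lq μ hab hu hv).trans_lt <| mul_lt_top
    (rpow_lt_top_of_nonneg (one_div_nonneg.mpr hab.nonneg) hua.ne)
    (rpow_lt_top_of_nonneg (one_div_nonneg.mpr hab.symm.nonneg) hvb.ne)

theorem integral_mul_condExp_of_stronglyMeasurable {Ω : Type*} {m m₀ : MeasurableSpace Ω}
    {μ : Measure Ω} (hm : m ≤ m₀) [SigmaFinite (μ.trim hm)] {g X : Ω → ℝ}
    (hg : StronglyMeasurable[m] g) (hgX : Integrable (g * X) μ) (hX : Integrable X μ) :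
    ∫ ω, g ω * μ[X|m] ω ∂μ = ∫ ω, g ω * X ω ∂μ :=
  calc ∫ ω, g ω * μ[X|m] ω ∂μ = ∫ ω, μ[g * X|m] ω ∂μ :=
        integral_congr_ae (condExp_mul_of_stronglyMeasurable_left hg hgX hX).symm
    _ = ∫ ω, g ω * X ω ∂μ := integral_condExp hm

theorem intervalIntegral.integral_congr_of_le {E : Type*} [NormedAddCommGroup E]
    [NormedSpace ℝ E] {f g : ℝ → E} {a b c : ℝ} (ha : a ≤ c) (hb : b ≤ c)
    (h : ∀ t ≤ c, f t = g t) :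
    ∫ t in a..b, f t = ∫ t in a..b, g t :=
  intervalIntegral.integral_congr fun t ht => h t (ht.2.trans (max_le ha hb))

theorem enorm_intervalIntegral_le_setLIntegral_Icc {E : Type*} [NormedAddCommGroup E]
    [NormedSpace ℝ E] {f : ℝ → E} {a b s : ℝ} (hs : s ∈ Icc a b) :
    ‖∫ t in s..b, f t‖ₑ ≤ ∫⁻ t in Icc a b, ‖f t‖ₑ := by
  rw [intervalIntegral.integral_of_le hs.2]
  exact (enorm_integral_le_lintegral_enorm _).trans
    (lintegral_mono_set (Ioc_subset_Icc_self.trans (Icc_subset_Icc_left hs.1)))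

theorem intervalIntegral.integral_mul_integral_triangle_swap {g h : ℝ → ℝ} {a b : ℝ}
    (hab : a ≤ b) (hg : IntervalIntegrable g volume a b) (hh : IntervalIntegrable h volume a b) :
    ∫ s in a..b, g s * ∫ t in s..b, h t = ∫ t in a..b, h t * ∫ s in a..t, g s := by
  set μ := volume.restrict (Ioc a b)
  set k : ℝ × ℝ → ℝ := {q | q.1 < q.2}.indicator fun q => g q.1 * h q.2
  have hk : Integrable k (μ.prod μ) :=
    (hg.1.mul_prod hh.1).indicator (measurableSet_lt measurable_fst measurable_snd)
  have hrow : ∀ s ∈ Ioc a b, ∫ t, k (s, t) ∂μ = g s * ∫ t in s..b, h t := by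
    intro s hs
    have hk_s : (fun t => k (s, t)) = (Ioi s).indicator fun t => g s * h t := by
      ext t; simp [k, indicator_apply]
    have hIoc : Ioi s ∩ Ioc a b = Ioc s b := by
      ext t; simp only [mem_inter_iff, mem_Ioi, mem_Ioc]
      exact ⟨fun h => ⟨h.1, h.2.2⟩, fun h => ⟨h.1, hs.1.trans h.1, h.2⟩⟩
    rw [hk_s, MeasureTheory.integral_indicator measurableSet_Ioi,
      Measure.restrict_restrict measurableSet_Ioi, hIoc, MeasureTheory.integral_const_mul,
      intervalIntegral.integral_of_le hs.2]
  have hcol : ∀ t ∈ Ioc a b, ∫ s, k (s, t) ∂μ = h t * ∫ s in a..t, g s := by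
    intro t ht
    have hk_t : (fun s => k (s, t)) = (Iio t).indicator fun s => g s * h t := by
      ext s; simp [k, indicator_apply]
    have hIoo : Iio t ∩ Ioc a b = Ioo a t := by
      ext s; simp only [mem_inter_iff, mem_Iio, mem_Ioc, mem_Ioo]
      exact ⟨fun h => ⟨h.2.1, h.1⟩, fun h => ⟨h.2, h.1, h.2.le.trans ht.2⟩⟩
    rw [hk_t, MeasureTheory.integral_indicator measurableSet_Iio,
      Measure.restrict_restrict measurableSet_Iio, hIoo, ← integral_Ioc_eq_integral_Ioo,
      MeasureTheory.integral_mul_const, mul_comm, intervalIntegral.integral_of_le ht.1.le]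
  calc ∫ s in a..b, g s * ∫ t in s..b, h t = ∫ s, ∫ t, k (s, t) ∂μ ∂μ := by
        rw [intervalIntegral.integral_of_le hab]
        exact setIntegral_congr_fun measurableSet_Ioc fun s hs => (hrow s hs).symm
    _ = ∫ t, ∫ s, k (s, t) ∂μ ∂μ := integral_integral_swap hk
    _ = ∫ t in a..b, h t * ∫ s in a..t, g s := by
        rw [intervalIntegral.integral_of_le hab]
        exact setIntegral_congr_fun measurableSet_Ioc hcol

theorem MeasureTheory.StronglyMeasurable.intervalIntegral_from_fst {Ω E : Type*}
    [MeasurableSpace Ω] [NormedAddCommGroup E] [NormedSpace ℝ E] {f : ℝ → Ω → E}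
    (hf : StronglyMeasurable (Function.uncurry f)) (b : ℝ) :
    StronglyMeasurable fun q : ℝ × Ω => ∫ t in q.1..b, f t q.2 := by
  have hIoc : ∀ {l u : ℝ × Ω → ℝ}, Measurable l → Measurable u →
      StronglyMeasurable fun q : ℝ × Ω => ∫ t in Ioc (l q) (u q), f t q.2 := by
    intro l u hl hu
    have hset : MeasurableSet {r : (ℝ × Ω) × ℝ | r.2 ∈ Ioc (l r.1) (u r.1)} :=
      (_root_.measurableSet_lt (hl.comp measurable_fst) measurable_snd).inter
        (_root_.measurableSet_le measurable_snd (hu.comp measurable_fst))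
    have hint := ((hf.comp_measurable (measurable_snd.prodMk
      (measurable_snd.comp measurable_fst))).indicator hset).integral_prod_right' (ν := volume)
    simpa [← integral_indicator measurableSet_Ioc, indicator_apply] using hint
  exact (hIoc measurable_fst measurable_const).sub (hIoc measurable_const measurable_fst)

section AdjointIdentity

variable {Ω : Type*} {m : MeasurableSpace Ω} {P : Measure Ω} {f φ : ℝ → Ω → ℝ} {p q : ℝ}

theorem measurable_lintegral_Icc_enorm (hf : StronglyMeasurable (Function.uncurry f)) :
    Measurable fun ω => ∫⁻ t in Icc (0 : ℝ) 1, ‖f t ω‖ₑ :=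
  hf.measurable.enorm.lintegral_prod_left

theorem lintegral_rpow_lintegral_Icc_lt_top (hq : 1 ≤ q)
    (hf : StronglyMeasurable (Function.uncurry f))
    (hfi : ∫⁻ ω, (∫⁻ t in Icc (0 : ℝ) 1, ‖f t ω‖ₑ ^ q) ∂P < ∞) :
    ∫⁻ ω, (∫⁻ t in Icc (0 : ℝ) 1, ‖f t ω‖ₑ) ^ q ∂P < ∞ := by
  have : IsProbabilityMeasure (volume.restrict (Icc (0 : ℝ) 1)) := ⟨by simp⟩
  refine lt_of_le_of_lt (lintegral_mono fun ω => ?_) hfi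
  exact rpow_lintegral_le_lintegral_rpow hq hf.of_uncurry_right.measurable.enorm.aemeasurable

theorem lintegral_lintegral_Icc_lt_top [IsFiniteMeasure P] (hq : 1 ≤ q)
    (hf : StronglyMeasurable (Function.uncurry f))
    (hfi : ∫⁻ ω, (∫⁻ t in Icc (0 : ℝ) 1, ‖f t ω‖ₑ ^ q) ∂P < ∞) :
    ∫⁻ ω, (∫⁻ t in Icc (0 : ℝ) 1, ‖f t ω‖ₑ) ∂P < ∞ :=
  lintegral_lt_top_of_lintegral_rpow_lt_top hq (measurable_lintegral_Icc_enorm hf).aemeasurable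
    (lintegral_rpow_lintegral_Icc_lt_top hq hf hfi)

theorem ae_intervalIntegrable_of_lintegral_lt_top
    (hf : StronglyMeasurable (Function.uncurry f))
    (hfi : ∫⁻ ω, (∫⁻ t in Icc (0 : ℝ) 1, ‖f t ω‖ₑ) ∂P < ∞) :
    ∀ᵐ ω ∂P, IntervalIntegrable (f · ω) volume 0 1 := by
  filter_upwards [ae_lt_top (measurable_lintegral_Icc_enorm hf) hfi.ne] with ω hω
  refine (intervalIntegrable_iff_integrableOn_Ioc_of_le zero_le_one).2
    ⟨hf.of_uncurry_right.aestronglyMeasurable, ?_⟩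
  exact (lintegral_mono_set Ioc_subset_Icc_self).trans_lt hω

theorem integrable_intervalIntegral_tail (hf : StronglyMeasurable (Function.uncurry f))
    (hfi : ∫⁻ ω, (∫⁻ t in Icc (0 : ℝ) 1, ‖f t ω‖ₑ) ∂P < ∞) {s : ℝ} (hs : s ∈ Icc (0 : ℝ) 1) :
    Integrable (fun ω => ∫ t in s..1, f t ω) P :=
  ⟨((hf.intervalIntegral_from_fst 1).comp_measurable measurable_prodMk_left).aestronglyMeasurable,
    (lintegral_mono fun _ => enorm_intervalIntegral_le_setLIntegral_Icc hs).trans_lt hfi⟩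

theorem integrable_mul_intervalIntegral_tail [SFinite P] (hpq : p.HolderConjugate q)
    (hf : StronglyMeasurable (Function.uncurry f)) (hφ : StronglyMeasurable (Function.uncurry φ))
    (hfi : ∫⁻ ω, (∫⁻ t in Icc (0 : ℝ) 1, ‖f t ω‖ₑ ^ q) ∂P < ∞)
    (hφi : ∫⁻ ω, (∫⁻ t in Icc (0 : ℝ) 1, ‖φ t ω‖ₑ ^ p) ∂P < ∞) :
    Integrable (fun r : ℝ × Ω => φ r.1 r.2 * ∫ t in r.1..1, f t r.2)
      ((volume.restrict (Ioc (0 : ℝ) 1)).prod P) := by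
  have hH := hφ.mul (hf.intervalIntegral_from_fst 1)
  refine ⟨hH.aestronglyMeasurable, ?_⟩
  calc ∫⁻ r, ‖φ r.1 r.2 * ∫ t in r.1..1, f t r.2‖ₑ ∂(volume.restrict (Ioc (0 : ℝ) 1)).prod P
      = ∫⁻ ω, (∫⁻ s in Ioc (0 : ℝ) 1, ‖φ s ω * ∫ t in s..1, f t ω‖ₑ) ∂P :=
        lintegral_prod_symm _ hH.measurable.enorm.aemeasurable
    _ ≤ ∫⁻ ω, (∫⁻ s in Icc (0 : ℝ) 1, ‖φ s ω‖ₑ) * (∫⁻ t in Icc (0 : ℝ) 1, ‖f t ω‖ₑ) ∂P := by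
        refine lintegral_mono fun ω => ?_
        calc ∫⁻ s in Ioc (0 : ℝ) 1, ‖φ s ω * ∫ t in s..1, f t ω‖ₑ
            ≤ ∫⁻ s in Ioc (0 : ℝ) 1, ‖φ s ω‖ₑ * ∫⁻ t in Icc (0 : ℝ) 1, ‖f t ω‖ₑ := by
              refine setLIntegral_mono' measurableSet_Ioc fun s hs => ?_
              rw [enorm_mul]
              gcongr
              exact enorm_intervalIntegral_le_setLIntegral_Icc (Ioc_subset_Icc_self hs)
          _ ≤ (∫⁻ s in Icc (0 : ℝ) 1, ‖φ s ω‖ₑ) * ∫⁻ t in Icc (0 : ℝ) 1, ‖f t ω‖ₑ := by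
              rw [lintegral_mul_const _ hφ.of_uncurry_right.measurable.enorm]
              gcongr
              exact Ioc_subset_Icc_self
    _ < ∞ := lintegral_mul_lt_top_of_holderConjugate hpq
        (measurable_lintegral_Icc_enorm hφ).aemeasurable
        (measurable_lintegral_Icc_enorm hf).aemeasurable
        (lintegral_rpow_lintegral_Icc_lt_top hpq.lt.le hφ hφi)
        (lintegral_rpow_lintegral_Icc_lt_top hpq.symm.lt.le hf hfi)

theorem integral_mul_condExp_tail_eq [IsFiniteMeasure P] (ℱ : Filtration ℝ m)
    (hpq : p.HolderConjugate q) (hf : StronglyMeasurable (Function.uncurry f))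
    (hφ : StronglyMeasurable (Function.uncurry φ))
    (hφ_adapted : ∀ s ∈ Icc (0 : ℝ) 1, StronglyMeasurable[ℱ s] (φ s))
    (hfi : ∫⁻ ω, (∫⁻ t in Icc (0 : ℝ) 1, ‖f t ω‖ₑ ^ q) ∂P < ∞)
    (hφi : ∫⁻ ω, (∫⁻ t in Icc (0 : ℝ) 1, ‖φ t ω‖ₑ ^ p) ∂P < ∞) :
    ∫ s in (0 : ℝ)..1, ∫ ω, φ s ω * (P[fun ω' => ∫ t in s..(1 : ℝ), f t ω'|ℱ s]) ω ∂P
      = ∫ ω, (∫ t in (0 : ℝ)..1, f t ω * (∫ s in (0 : ℝ)..t, φ s ω)) ∂P := by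
  have hH := integrable_mul_intervalIntegral_tail hpq hf hφ hfi hφi
  have hf₁ := lintegral_lintegral_Icc_lt_top hpq.symm.lt.le hf hfi
  have hφ₁ := lintegral_lintegral_Icc_lt_top hpq.lt.le hφ hφi
  calc ∫ s in (0 : ℝ)..1, ∫ ω, φ s ω * (P[fun ω' => ∫ t in s..(1 : ℝ), f t ω'|ℱ s]) ω ∂P
      = ∫ s in Ioc (0 : ℝ) 1, ∫ ω, φ s ω * (∫ t in s..1, f t ω) ∂P := by
        rw [intervalIntegral.integral_of_le zero_le_one]
        refine integral_congr_ae ?_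
        filter_upwards [ae_restrict_mem measurableSet_Ioc, hH.prod_right_ae] with s hs hsH
        exact integral_mul_condExp_of_stronglyMeasurable (ℱ.le s)
          (hφ_adapted s (Ioc_subset_Icc_self hs)) hsH
          (integrable_intervalIntegral_tail hf hf₁ (Ioc_subset_Icc_self hs))
    _ = ∫ ω, (∫ s in Ioc (0 : ℝ) 1, φ s ω * ∫ t in s..1, f t ω) ∂P := integral_integral_swap hH
    _ = ∫ ω, (∫ t in (0 : ℝ)..1, f t ω * (∫ s in (0 : ℝ)..t, φ s ω)) ∂P := by
        refine integral_congr_ae ?_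
        filter_upwards [ae_intervalIntegrable_of_lintegral_lt_top hf hf₁,
          ae_intervalIntegrable_of_lintegral_lt_top hφ hφ₁] with ω hfω hφω
        rw [← intervalIntegral.integral_of_le zero_le_one]
        exact intervalIntegral.integral_mul_integral_triangle_swap zero_le_one hφω hfω

end AdjointIdentity

theorem stmt_4_general {Ω : Type*} {m : MeasurableSpace Ω} (P : Measure Ω)
    [IsProbabilityMeasure P]
    (ℱ : Filtration ℝ m)
    (p p' : ℝ) (hp : 1 < p) (hp' : p' = p / (p - 1))
    (f φ : ℝ → Ω → ℝ) (hf : ProgMeasurable ℱ f) (hφ : ProgMeasurable ℱ φ)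
    (hfi : ∫⁻ ω, (∫⁻ t in Set.Icc (0 : ℝ) 1, (‖f t ω‖₊ : ℝ≥0∞) ^ p') ∂P < ⊤)
    (hφi : ∫⁻ ω, (∫⁻ t in Set.Icc (0 : ℝ) 1, (‖φ t ω‖₊ : ℝ≥0∞) ^ p) ∂P < ⊤) :
    ∫ s in (0 : ℝ)..1, ∫ ω, φ s ω * (P[fun ω' => ∫ t in s..(1 : ℝ), f t ω'|ℱ s]) ω ∂P
      = ∫ ω, (∫ t in (0 : ℝ)..1, f t ω * (∫ s in (0 : ℝ)..t, φ s ω)) ∂P := by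
  obtain ⟨g, hg, hgf⟩ := IsStronglyProgressive.exists_stronglyMeasurable_uncurry_eq_of_le hf 1
  obtain ⟨ψ, hψ, hψφ⟩ := IsStronglyProgressive.exists_stronglyMeasurable_uncurry_eq_of_le hφ 1
  have hgf' : ∀ ω, ∀ t ≤ 1, g t ω = f t ω := fun ω t ht => congrFun (hgf t ht) ω
  have hψφ' : ∀ ω, ∀ t ≤ 1, ψ t ω = φ t ω := fun ω t ht => congrFun (hψφ t ht) ω
  have hgi : ∫⁻ ω, (∫⁻ t in Icc (0 : ℝ) 1, ‖g t ω‖ₑ ^ p') ∂P < ∞ :=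
    (lintegral_congr fun ω => setLIntegral_congr_fun measurableSet_Icc fun t ht => by
      rw [hgf' ω t ht.2]; rfl).trans_lt hfi
  have hψi : ∫⁻ ω, (∫⁻ t in Icc (0 : ℝ) 1, ‖ψ t ω‖ₑ ^ p) ∂P < ∞ :=
    (lintegral_congr fun ω => setLIntegral_congr_fun measurableSet_Icc fun t ht => by
      rw [hψφ' ω t ht.2]; rfl).trans_lt hφi
  calc ∫ s in (0 : ℝ)..1, ∫ ω, φ s ω * (P[fun ω' => ∫ t in s..(1 : ℝ), f t ω'|ℱ s]) ω ∂P
      = ∫ s in (0 : ℝ)..1, ∫ ω, ψ s ω * (P[fun ω' => ∫ t in s..(1 : ℝ), g t ω'|ℱ s]) ω ∂P := by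
        refine intervalIntegral.integral_congr fun s hs => ?_
        have hs1 : s ≤ 1 := by simpa using hs.2
        simp only [hψφ s hs1, intervalIntegral.integral_congr_of_le hs1 le_rfl (hgf' _)]
    _ = ∫ ω, (∫ t in (0 : ℝ)..1, g t ω * (∫ s in (0 : ℝ)..t, ψ s ω)) ∂P :=
        integral_mul_condExp_tail_eq ℱ (hp' ▸ Real.HolderConjugate.conjExponent hp) hg hψ
          (fun s hs => hψφ s hs.2 ▸ IsStronglyProgressive.stronglyAdapted hφ s) hgi hψi
    _ = ∫ ω, (∫ t in (0 : ℝ)..1, f t ω * (∫ s in (0 : ℝ)..t, φ s ω)) ∂P := by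
        refine integral_congr_ae (.of_forall fun ω => ?_)
        refine intervalIntegral.integral_congr_of_le zero_le_one le_rfl fun t ht => ?_
        rw [hgf' ω t ht, intervalIntegral.integral_congr_of_le zero_le_one ht (hψφ' ω)]

/-- Adjoint identity for the integration operator `𝓛`: for `f ∈ L_{p'}` and
`φ ∈ L_p` (progressively measurable),
`∫_0^1 E[ φ(s)·E[∫_s^1 f dt | 𝔉_s] ] ds = E[ ∫_0^1 f(t) (∫_0^t φ(s) ds) dt ]`,
i.e. the restriction of `𝓛*` to `L_{p'}` is `𝓛*(f)(t,ω) = E[∫_t^1 f ds | 𝔉_t](ω)`. -/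
theorem stmt_4 {Ω : Type*} {m : MeasurableSpace Ω} (P : Measure Ω)
    [IsProbabilityMeasure P] [P.IsComplete]
    (ℱ : Filtration ℝ m)
    (hright : ∀ t : ℝ, ℱ t = ⨅ s ∈ Set.Ioi t, ℱ s)
    (p p' : ℝ) (hp : 1 < p) (hp' : p' = p / (p - 1))
    (f φ : ℝ → Ω → ℝ) (hf : ProgMeasurable ℱ f) (hφ : ProgMeasurable ℱ φ)
    (hfi : ∫⁻ ω, (∫⁻ t in Set.Icc (0 : ℝ) 1, (‖f t ω‖₊ : ℝ≥0∞) ^ p') ∂P < ⊤)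
    (hφi : ∫⁻ ω, (∫⁻ t in Set.Icc (0 : ℝ) 1, (‖φ t ω‖₊ : ℝ≥0∞) ^ p) ∂P < ⊤) :
    ∫ s in (0 : ℝ)..1, ∫ ω, φ s ω * (P[fun ω' => ∫ t in s..(1 : ℝ), f t ω'|ℱ s]) ω ∂P
      = ∫ ω, (∫ t in (0 : ℝ)..1, f t ω * (∫ s in (0 : ℝ)..t, φ s ω)) ∂P :=
  stmt_4_general P ℱ p p' hp hp' f φ hf hφ hfi hφi
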